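/- arXiv:2510.10863 — 6 statements merged into one kernel-verified Lean document; each statement's English description precedes it below -/
import Mathlib

section
/- Let X be a compact metric space and ε > 0. Suppose g_1,…,g_l are maps on X, and to each g_i are associated a point x_i⁺ ∈ X and a closed set Z_i ⊆ X such that: (a) d(x_i⁺, Z_i) ≥ 2ε and d(x_i⁺, Z_j) ≥ 6ε for all i ≠ j; (b) g_i maps X ∖ N_ε(Z_i) into the closed ε-ball around x_i⁺; (c) g_i is ε-Lipschitz on X ∖ N_ε(Z_i). Then for any word g = h_1 ∘ ⋯ ∘ h_k with each h_m ∈ {g_1,…,g_l} and h_m ≠ h_{m+1}, the composition g maps X ∖ N_ε(Z_{i(k)}) into the closed ε-ball around x_{i(1)}⁺, where i(m) is the index of h_m; moreover the restriction is ε^k-Lipschitz. -/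
/-- Ping-pong for contracting maps: if each g_i contracts the complement of
N_ε(Z_i) into the ε-ball around x_i⁺, with d(x_i⁺, Z_i) ≥ 2ε and d(x_i⁺, Z_j) ≥ 6ε for
i ≠ j, then any reduced word h_1 ∘ ⋯ ∘ h_{k+1} (adjacent letters distinct) maps the
complement of N_ε(Z_{last}) into the ε-ball around x_{first}⁺ and is ε^{k+1}-Lipschitz
there. -/
theorem stmt3 {X : Type*} [MetricSpace X] [CompactSpace X]
    (ε : ℝ) (hε : 0 < ε)
    (l : ℕ) (g : Fin l → X → X) (xp : Fin l → X) (Z : Fin l → Set X)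
    (hZ : ∀ i, IsClosed (Z i))
    (ha1 : ∀ i, ∀ z ∈ Z i, 2 * ε ≤ dist (xp i) z)
    (ha2 : ∀ i j, i ≠ j → ∀ z ∈ Z j, 6 * ε ≤ dist (xp i) z)
    (hb : ∀ i, Set.MapsTo (g i) (Metric.thickening ε (Z i))ᶜ (Metric.closedBall (xp i) ε))
    (hc : ∀ i, LipschitzOnWith (Real.toNNReal ε) (g i) (Metric.thickening ε (Z i))ᶜ)
    (k : ℕ) (idx : Fin (k + 1) → Fin l)
    (hadj : ∀ m : Fin k, idx m.castSucc ≠ idx m.succ) :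
    Set.MapsTo ((List.ofFn (fun m => g (idx m))).foldr (· ∘ ·) id)
        (Metric.thickening ε (Z (idx (Fin.last k))))ᶜ
        (Metric.closedBall (xp (idx 0)) ε) ∧
      LipschitzOnWith (Real.toNNReal (ε ^ (k + 1)))
        ((List.ofFn (fun m => g (idx m))).foldr (· ∘ ·) id)
        (Metric.thickening ε (Z (idx (Fin.last k))))ᶜ := by
    induction k with
  | zero =>
    constructor
    · simpa using hb (idx 0)
    · simpa using hc (idx 0)
  | succ k ih =>
    have hne : idx 1 ≠ idx 0 := by
      have := hadj 0
      simpa [Fin.castSucc_zero, Fin.succ_zero_eq_one] using this.symm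
    obtain ⟨ihm, ihl⟩ := ih (fun m => idx m.succ)
      (fun m => by
        have := hadj m.succ
        simpa only [Fin.succ_castSucc] using this)
    have hsub : Metric.closedBall (xp (idx 1)) ε ⊆ (Metric.thickening ε (Z (idx 0)))ᶜ := by
      intro y hy hmem
      obtain ⟨z, hz, hdz⟩ := Metric.mem_thickening_iff.mp hmem
      have h6 := ha2 (idx 1) (idx 0) hne z hz
      have ht : dist (xp (idx 1)) z ≤ dist (xp (idx 1)) y + dist y z := dist_triangle _ _ _
      have hy' : dist (xp (idx 1)) y ≤ ε := by
        rw [dist_comm]; exact Metric.mem_closedBall.mp hy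
      linarith
    have hlist : (List.ofFn (fun m : Fin (k+2) => g (idx m))).foldr (· ∘ ·) id
        = g (idx 0) ∘ (List.ofFn (fun m : Fin (k+1) => g (idx m.succ))).foldr (· ∘ ·) id := by
      rw [List.ofFn_succ]; rfl
    have hlast : (Fin.last k).succ = Fin.last (k+1) := Fin.succ_last k
    rw [hlast] at ihm ihl
    have hone : (0 : Fin (k+1)).succ = 1 := Fin.succ_zero_eq_one
    rw [hone] at ihm
    have ihm' := ihm.mono_right hsub
    constructor
    · rw [hlist]
      exact (hb (idx 0)).comp ihm'
    · rw [hlist]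
      have := (hc (idx 0)).comp ihl ihm'
      convert this using 1
      rw [← Real.toNNReal_mul hε.le, ← pow_succ']
end

section
/- Let S be a finite set and κ : S* → [0,∞) a function on the free semigroup S* on S (nonempty words) satisfying κ(w·s) ≤ κ(w) + κ(s) for every word w and letter s ∈ S. If δ > 0 satisfies ∑_{s∈S} e^{-δ·κ(s)} ≥ 1, then for every word w and every m ≥ 0, ∑_{v ∈ S^m} e^{-δ·κ(w·v)} ≥ e^{-δ·κ(w)}; consequently ∑_{w ∈ S*} e^{-δ·κ(w)} = ∑_{m≥1} ∑_{w ∈ S^m} e^{-δ·κ(w)} = ∞. -/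
/-- For a subadditive weight κ on the free semigroup over a finite alphabet S
(modeled by nonempty lists), if ∑_{s∈S} e^{-δκ(s)} ≥ 1 then each layered sum satisfies
∑_{v∈S^m} e^{-δκ(wv)} ≥ e^{-δκ(w)}, and the Poincaré series of the free semigroup
diverges at δ. -/
theorem stmt4 {S : Type*} [Fintype S] (κ : List S → ℝ) (hκ0 : ∀ w, 0 ≤ κ w)
    (hsub : ∀ (w : List S) (s : S), κ (w ++ [s]) ≤ κ w + κ [s])
    (δ : ℝ) (hδ : 0 < δ)
    (hS : 1 ≤ ∑ s : S, Real.exp (-δ * κ [s])) :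
    (∀ (w : List S) (m : ℕ),
        Real.exp (-δ * κ w) ≤ ∑ v : Fin m → S, Real.exp (-δ * κ (w ++ List.ofFn v))) ∧
      ¬ Summable (fun w : {w : List S // w ≠ []} => Real.exp (-δ * κ w.1)) := by
  have key : ∀ (w : List S) (m : ℕ),
      Real.exp (-δ * κ w) ≤ ∑ v : Fin m → S, Real.exp (-δ * κ (w ++ List.ofFn v)) := by
    intro w m
    induction m generalizing w with
    | zero => simp
    | succ m ih =>
      have hequiv : ∑ v : Fin (m+1) → S, Real.exp (-δ * κ (w ++ List.ofFn v))
          = ∑ p : S × (Fin m → S), Real.exp (-δ * κ ((w ++ [p.1]) ++ List.ofFn p.2)) := by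
        rw [← Fintype.sum_equiv (Fin.consEquiv (fun _ : Fin (m+1) => S))
          (fun p => Real.exp (-δ * κ ((w ++ [p.1]) ++ List.ofFn p.2)))
          (fun v => Real.exp (-δ * κ (w ++ List.ofFn v)))]
        intro p
        simp [List.ofFn_succ, Fin.consEquiv]
      rw [hequiv, Fintype.sum_prod_type]
      calc Real.exp (-δ * κ w)
          ≤ ∑ s : S, Real.exp (-δ * κ w) * Real.exp (-δ * κ [s]) := by
            rw [← Finset.mul_sum]
            nlinarith [Real.exp_pos (-δ * κ w)]
        _ ≤ ∑ s : S, Real.exp (-δ * κ (w ++ [s])) := by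
            apply Finset.sum_le_sum
            intro s _
            rw [← Real.exp_add]
            apply Real.exp_le_exp.2
            nlinarith [hsub w s]
        _ ≤ ∑ s : S, ∑ v : Fin m → S, Real.exp (-δ * κ ((w ++ [s]) ++ List.ofFn v)) :=
            Finset.sum_le_sum fun s _ => ih (w ++ [s])
  refine ⟨key, ?_⟩
  classical
  intro hsum
  set f : {w : List S // w ≠ []} → ℝ := fun w => Real.exp (-δ * κ w.1) with hf
  have hc : (0:ℝ) < Real.exp (-δ * κ []) := Real.exp_pos _
  obtain ⟨N, hN⟩ := exists_nat_gt ((∑' w, f w) / Real.exp (-δ * κ []))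
  set g : (Σ m : Fin N, (Fin ((m : ℕ)+1) → S)) → {w : List S // w ≠ []} :=
    fun p => ⟨List.ofFn p.2, by simp⟩ with hg0
  have hg : Function.Injective g := by
    rintro ⟨m, v⟩ ⟨m', v'⟩ h
    simp only [hg0, Subtype.mk_eq_mk] at h
    have hlen : (m : ℕ) = m' := by
      have := congrArg List.length h
      simpa using this
    have hm : m = m' := Fin.ext hlen
    subst hm
    simp only [Sigma.mk.inj_iff, heq_eq_eq, true_and]
    exact List.ofFn_injective h
  have hle : ∑ p : Σ m : Fin N, (Fin ((m : ℕ)+1) → S), f (g p) ≤ ∑' w, f w := by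
    calc ∑ p : Σ m : Fin N, (Fin ((m : ℕ)+1) → S), f (g p)
        = ∑ w ∈ Finset.univ.image g, f w :=
          (Finset.sum_image (fun x _ y _ h => hg h)).symm
      _ ≤ ∑' w, f w := Summable.sum_le_tsum _ (fun i _ => (Real.exp_pos _).le) hsum
  have hlow : (N : ℝ) * Real.exp (-δ * κ []) ≤
      ∑ p : Σ m : Fin N, (Fin ((m : ℕ)+1) → S), f (g p) := by
    rw [← Finset.univ_sigma_univ, Finset.sum_sigma]
    have : ∀ m : Fin N, Real.exp (-δ * κ []) ≤
        ∑ v : Fin ((m : ℕ)+1) → S, f (g ⟨m, v⟩) := by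
      intro m
      have := key [] ((m : ℕ)+1)
      simpa [hg0, hf] using this
    calc (N : ℝ) * Real.exp (-δ * κ [])
        = ∑ _m : Fin N, Real.exp (-δ * κ []) := by
          simp [Finset.sum_const, mul_comm]
      _ ≤ ∑ m : Fin N, ∑ v : Fin ((m : ℕ)+1) → S, f (g ⟨m, v⟩) :=
          Finset.sum_le_sum fun m _ => this m
  have : (N : ℝ) * Real.exp (-δ * κ []) ≤ ∑' w, f w := le_trans hlow hle
  have h2 : (∑' w, f w) / Real.exp (-δ * κ []) < N := hN
  rw [div_lt_iff₀ hc] at h2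
  linarith
end

section
/- Let G be a group, V a finite-dimensional normed real vector space, κ : G → V, and let Δ be a finite set of linear functionals on V. Let S ⊆ G be a finite set and C_0 > 0 a constant such that ‖κ(gh) − κ(g) − κ(h)‖ ≤ C_0 for all g, h in the semigroup generated by S. If min_{α∈Δ} min_{g∈S} α(κ(g)) > C_0 · max_{α∈Δ} ‖α‖_op, then setting C := min_{α∈Δ} min_{g∈S} α(κ(g)) − C_0 · max_{α∈Δ} ‖α‖_op > 0, every product g_1 ⋯ g_m with g_i ∈ S satisfies α(κ(g_1 ⋯ g_m)) ≥ C·m for all α ∈ Δ. -/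
/-- Anosov-type linear lower bound: if κ is coarsely subadditive (defect ≤ C₀)
on the subsemigroup generated by a finite set S, and min_{α∈Δ} min_{g∈S} α(κ(g)) exceeds
C₀·max_{α∈Δ}‖α‖, then α(κ(g₁⋯g_m)) ≥ C·m for C the difference. -/
theorem stmt8 {G V : Type*} [Group G] [NormedAddCommGroup V] [NormedSpace ℝ V]
    [FiniteDimensional ℝ V]
    (κ : G → V) (Δ : Finset (V →L[ℝ] ℝ)) (hΔ : Δ.Nonempty)
    (S : Finset G) (hS : S.Nonempty) (C₀ : ℝ) (hC₀ : 0 < C₀)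
    (hsub : ∀ g ∈ Subsemigroup.closure (S : Set G), ∀ h ∈ Subsemigroup.closure (S : Set G),
      ‖κ (g * h) - κ g - κ h‖ ≤ C₀)
    (hbig : C₀ * (Δ.sup' hΔ fun α => ‖α‖) <
      Δ.inf' hΔ fun α => S.inf' hS fun g => α (κ g)) :
    ∀ m : ℕ, 1 ≤ m → ∀ gi : Fin m → G, (∀ i, gi i ∈ S) → ∀ α ∈ Δ,
      ((Δ.inf' hΔ fun β => S.inf' hS fun g => β (κ g)) -
          C₀ * (Δ.sup' hΔ fun β => ‖β‖)) * m ≤ α (κ ((List.ofFn gi).prod)) := by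
  set M : ℝ := Δ.sup' hΔ fun β => ‖β‖ with hM
  set I : ℝ := Δ.inf' hΔ fun β => S.inf' hS fun g => β (κ g) with hI
  set C : ℝ := I - C₀ * M with hC
  have hMnn : 0 ≤ M := by
    obtain ⟨β, hβ⟩ := hΔ
    exact le_trans (norm_nonneg β) (Finset.le_sup' _ hβ)
  have hIkey : ∀ α ∈ Δ, ∀ g ∈ S, I ≤ α (κ g) := fun α hα g hg =>
    le_trans (Finset.inf'_le _ hα) (Finset.inf'_le _ hg)
  have hCI : C ≤ I := by
    have : 0 ≤ C₀ * M := mul_nonneg hC₀.le hMnn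
    simp [hC]; linarith
  have aux : ∀ l : List G, (∀ x ∈ l, x ∈ S) → l ≠ [] →
      l.prod ∈ Subsemigroup.closure (S : Set G) ∧
      ∀ α ∈ Δ, C * l.length ≤ α (κ l.prod) := by
    intro l
    induction l with
    | nil => intro _ h; exact absurd rfl h
    | cons g t ih =>
      intro hmem _
      have hgS : g ∈ S := hmem g (List.mem_cons_self)
      have hgcl : g ∈ Subsemigroup.closure (S : Set G) :=
        Subsemigroup.subset_closure hgS
      rcases eq_or_ne t [] with rfl | ht
      · refine ⟨by simpa using hgcl, ?_⟩
        intro α hα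
        simp only [List.prod_cons, List.prod_nil, mul_one, List.length_cons,
          List.length_nil, Nat.cast_zero, zero_add, Nat.cast_one, one_mul]
        exact le_trans hCI (hIkey α hα g hgS)
      · obtain ⟨hpcl, hpbd⟩ := ih (fun x hx => hmem x (List.mem_cons_of_mem _ hx)) ht
        refine ⟨by rw [List.prod_cons]; exact Subsemigroup.mul_mem _ hgcl hpcl, ?_⟩
        intro α hα
        have hαM : ‖α‖ ≤ M := Finset.le_sup' _ hα
        have hnorm : ‖κ (g * t.prod) - κ g - κ t.prod‖ ≤ C₀ := hsub g hgcl t.prod hpcl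
        have h1 : |α (κ (g * t.prod) - κ g - κ t.prod)| ≤ M * C₀ := by
          calc |α (κ (g * t.prod) - κ g - κ t.prod)| ≤ ‖α‖ * ‖κ (g * t.prod) - κ g - κ t.prod‖ :=
                α.le_opNorm _
            _ ≤ M * C₀ := mul_le_mul hαM hnorm (norm_nonneg _) hMnn
        have h2 : -(M * C₀) ≤ α (κ (g * t.prod)) - α (κ g) - α (κ t.prod) := by
          have := neg_abs_le (α (κ (g * t.prod) - κ g - κ t.prod))
          simp only [map_sub] at this h1 ⊢
          linarith [h1, this]
        have h3 : I ≤ α (κ g) := hIkey α hα g hgS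
        have h4 : C * t.length ≤ α (κ t.prod) := hpbd α hα
        rw [List.prod_cons, List.length_cons]
        push_cast
        have : C * (t.length + 1) = C * t.length + C := by ring
        rw [this]
        have hCdef : C = I - C₀ * M := hC
        nlinarith [h2, h3, h4]
  intro m hm gi hgi α hα
  have hne : List.ofFn gi ≠ [] := by
    have : (List.ofFn gi).length = m := List.length_ofFn
    intro h; rw [h] at this; simp at this; omega
  have hmem : ∀ x ∈ List.ofFn gi, x ∈ S := by
    intro x hx
    obtain ⟨i, rfl⟩ := List.mem_ofFn.1 hx
    exact hgi i
  have := (aux (List.ofFn gi) hmem hne).2 α hα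
  rwa [List.length_ofFn] at this
end

section
/- Let X be a metric space and suppose S is a finite set of elements of a semigroup acting on a compact metric space F, with a 'shadow' assignment γ ↦ 𝒮(γ) ⊆ F and a coarser shadow γ ↦ 𝒮'(γ) ⊇ 𝒮(γ) for each element γ of the free semigroup on S, satisfying: (i) nesting: for every word γ and letter ζ ∈ S, 𝒮(γζ) ⊆ 𝒮'(γ) ⊆ 𝒮(γ); (ii) disjointness: 𝒮(ζ_1) ∩ 𝒮(ζ_2) = ∅ for distinct ζ_1, ζ_2 ∈ S; (iii) nonemptiness: 𝒮(γ) ≠ ∅ for every word γ. Then the evaluation map from the free semigroup on S to the acting semigroup is injective on words; that is, if two words g_1⋯g_k and h_1⋯h_j represent the same element, and every represented element has nonempty shadow while the identity element is never represented by a nonempty word, then k = j and g_i = h_i for all i. -/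
/-- Freeness from shadows: with a shadow assignment 𝒮 and coarser shadow 𝒮'
satisfying nesting 𝒮(γζ) ⊆ 𝒮'(γ) ⊆ 𝒮(γ), disjointness of shadows of distinct generators,
nonemptiness of all shadows, and the identity never being represented by a nonempty word,
the evaluation map on nonempty words is injective. -/
theorem stmt9 {G : Type*} [Group G] {F : Type*} [MetricSpace F] [CompactSpace F]
    {ι : Type*} [Fintype ι] (a : ι → G) (𝒮 𝒮' : G → Set F)
    (hnest : ∀ w : List ι, w ≠ [] → ∀ ζ : ι,
      𝒮 (((w ++ [ζ]).map a).prod) ⊆ 𝒮' ((w.map a).prod) ∧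
        𝒮' ((w.map a).prod) ⊆ 𝒮 ((w.map a).prod))
    (hdisj : ∀ ζ₁ ζ₂ : ι, ζ₁ ≠ ζ₂ → 𝒮 (a ζ₁) ∩ 𝒮 (a ζ₂) = ∅)
    (hne : ∀ w : List ι, w ≠ [] → (𝒮 ((w.map a).prod)).Nonempty)
    (hid : ∀ w : List ι, w ≠ [] → (w.map a).prod ≠ 1) :
    ∀ w₁ w₂ : List ι, w₁ ≠ [] → w₂ ≠ [] →
      (w₁.map a).prod = (w₂.map a).prod → w₁ = w₂ := by
  have key : ∀ w : List ι, ∀ h : w ≠ [], 𝒮 ((w.map a).prod) ⊆ 𝒮 (a (w.head h)) := by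
    intro w
    induction w using List.reverseRecOn with
    | nil => intro h; exact absurd rfl h
    | append_singleton s ζ ih =>
      intro h
      rcases eq_or_ne s [] with rfl | hs
      · simp
      · have h1 := hnest s hs ζ
        have : 𝒮 (((s ++ [ζ]).map a).prod) ⊆ 𝒮 ((s.map a).prod) :=
          h1.1.trans h1.2
        have h2 := this.trans (ih hs)
        have hhead : (s ++ [ζ]).head h = s.head hs := by
          cases s with
          | nil => exact absurd rfl hs
          | cons x t => rfl
        rw [hhead]
        exact h2
  intro w₁
  induction w₁ with
  | nil => intro w₂ h; exact absurd rfl h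
  | cons x s ih =>
    intro w₂ _ h₂ hprod
    cases w₂ with
    | nil => exact absurd rfl h₂
    | cons y t =>
      have hxy : x = y := by
        by_contra hne'
        obtain ⟨p, hp⟩ := hne (x :: s) (by simp)
        have hp1 : p ∈ 𝒮 (a x) := key (x :: s) (by simp) hp
        have hp2 : p ∈ 𝒮 (a y) := by
          rw [hprod] at hp
          exact key (y :: t) (by simp) hp
        have := hdisj x y hne'
        exact absurd (Set.mem_inter hp1 hp2) (by rw [this]; simp)
      subst hxy
      simp only [List.map_cons, List.prod_cons, mul_right_cancel_iff,
        mul_left_cancel_iff] at hprod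
      rcases eq_or_ne s [] with rfl | hs
      · rcases eq_or_ne t [] with rfl | ht
        · rfl
        · exfalso
          exact hid t ht (by simpa using hprod.symm)
      · rcases eq_or_ne t [] with rfl | ht
        · exfalso
          exact hid s hs (by simpa using hprod)
        · rw [ih t hs ht hprod]
end

section
/- Let (c_n)_{n≥1} be a sequence of positive reals and suppose there exist constants B ≥ 1, λ > 0, δ(Γ) > 0 and sets A_n ⊇ A'_n of group elements with weights b : A_n → [n, ∞) such that #A'_n ≥ (1/B)·e^{−(δ(Γ)+1)λn}·#A_n, and for all σ ∈ A_n, γ ∈ A'_n: b(σ) ≥ (b(γ) − λw)/(1+λ) for a fixed w ≥ 1. Fix δ_0 > δ(1+λ) with (δ(Γ)+1)λ − (δ_0/(1+λ) − δ) < 0. If ∑_{γ∈A'_n} e^{−δ·b(γ)} ≤ M for all n, then ∑_{σ∈A_n} e^{−δ_0·b(σ)} ≤ M·B·e^{δ_0 λ w/(1+λ)} for all n. Consequently, if limsup_n ∑_{σ∈A_n} e^{−δ_0·b(σ)} = ∞, then limsup_n ∑_{γ∈A'_n} e^{−δ·b(γ)} = ∞. -/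
/-- Weight transfer between annular sets A_n and their positive-proportion
subsets A'_n: a uniform bound M on the A'-sums at exponent δ yields a uniform bound on the
A-sums at exponent δ₀; consequently divergence of the A-sums (limsup = ∞) forces divergence
of the A'-sums. -/
theorem stmt12 {ι : Type*} [DecidableEq ι] (A A' : ℕ → Finset ι) (b : ι → ℝ)
    (B lam δΓ δ δ₀ w : ℝ)
    (hB : 1 ≤ B) (hlam : 0 < lam) (hδΓ : 0 < δΓ) (hδ : 0 < δ) (hw : 1 ≤ w)
    (hsub : ∀ n, A' n ⊆ A n)
    (hbn : ∀ n, ∀ σ ∈ A n, (n : ℝ) ≤ b σ)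
    (hcard : ∀ n, ((A n).card : ℝ) ≤ B * Real.exp ((δΓ + 1) * lam * n) * (A' n).card)
    (hrel : ∀ n, ∀ σ ∈ A n, ∀ γ ∈ A' n, (b γ - lam * w) / (1 + lam) ≤ b σ)
    (hδ₀ : δ * (1 + lam) < δ₀)
    (hineq : (δΓ + 1) * lam - (δ₀ / (1 + lam) - δ) < 0) :
    (∀ M : ℝ, (∀ n, ∑ γ ∈ A' n, Real.exp (-δ * b γ) ≤ M) →
        ∀ n, ∑ σ ∈ A n, Real.exp (-δ₀ * b σ) ≤
          M * B * Real.exp (δ₀ * lam * w / (1 + lam))) ∧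
      ((∀ M : ℝ, ∃ᶠ n in Filter.atTop, M ≤ ∑ σ ∈ A n, Real.exp (-δ₀ * b σ)) →
        ∀ M : ℝ, ∃ᶠ n in Filter.atTop, M ≤ ∑ γ ∈ A' n, Real.exp (-δ * b γ)) := by
  have h1lam : (0:ℝ) < 1 + lam := by linarith
  have hδ₀pos : (0:ℝ) < δ₀ := by nlinarith
  have hBe : (0:ℝ) < B * Real.exp (δ₀ * lam * w / (1 + lam)) := by positivity
  -- key per-n bound
  have key : ∀ n, ∑ σ ∈ A n, Real.exp (-δ₀ * b σ) ≤
      B * Real.exp (δ₀ * lam * w / (1 + lam)) * ∑ γ ∈ A' n, Real.exp (-δ * b γ) := by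
    intro n
    rcases (A' n).eq_empty_or_nonempty with hAe | hAe
    · have hc0 : ((A' n).card : ℝ) = 0 := by simp [hAe]
      have : ((A n).card : ℝ) ≤ 0 := by
        have := hcard n; rw [hc0] at this; linarith
      have hA0 : A n = ∅ := by
        have : (A n).card = 0 := by exact_mod_cast le_antisymm this (by positivity)
        simpa [Finset.card_eq_zero] using this
      simp [hA0, hAe]
    · set S := ∑ γ ∈ A' n, Real.exp (-δ * b γ) with hS
      set k : ℝ := ((A' n).card : ℝ) with hk
      have hkpos : 0 < k := by
        rw [hk]; exact_mod_cast Finset.card_pos.mpr hAe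
      set E : ℝ := Real.exp ((-(δ₀ - δ * (1 + lam)) * n + δ₀ * lam * w) / (1 + lam)) with hE
      -- per σ bound
      have hσbound : ∀ σ ∈ A n, Real.exp (-δ₀ * b σ) ≤ E * S / k := by
        intro σ hσ
        rw [le_div_iff₀ hkpos]
        have : Real.exp (-δ₀ * b σ) * k = ∑ γ ∈ A' n, Real.exp (-δ₀ * b σ) := by
          rw [Finset.sum_const, nsmul_eq_mul]; ring
        rw [this, hS, Finset.mul_sum]
        refine Finset.sum_le_sum fun γ hγ => ?_
        rw [hE, ← Real.exp_add]
        apply Real.exp_le_exp.mpr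
        rw [← sub_le_iff_le_add, show -δ₀ * b σ - -δ * b γ = -δ₀ * b σ + δ * b γ by ring,
          le_div_iff₀ h1lam]
        have hrel' : b γ - lam * w ≤ b σ * (1 + lam) := by
          have := hrel n σ hσ γ hγ
          rw [div_le_iff₀ h1lam] at this
          linarith
        have h1 : δ₀ * (b γ - lam * w) ≤ δ₀ * (b σ * (1 + lam)) :=
          mul_le_mul_of_nonneg_left hrel' hδ₀pos.le
        have hbγ : (n : ℝ) ≤ b γ := hbn n γ (hsub n hγ)
        have h2 : (δ₀ - δ * (1 + lam)) * n ≤ (δ₀ - δ * (1 + lam)) * b γ :=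
          mul_le_mul_of_nonneg_left hbγ (by linarith)
        nlinarith [h1, h2]
      calc ∑ σ ∈ A n, Real.exp (-δ₀ * b σ) ≤ ∑ _σ ∈ A n, E * S / k :=
            Finset.sum_le_sum hσbound
        _ = ((A n).card : ℝ) * (E * S / k) := by
            rw [Finset.sum_const, nsmul_eq_mul]
        _ ≤ (B * Real.exp ((δΓ + 1) * lam * n) * k) * (E * S / k) := by
            apply mul_le_mul_of_nonneg_right (hcard n)
            have hSpos : 0 ≤ S := Finset.sum_nonneg fun _ _ => (Real.exp_pos _).le
            positivity
        _ = B * (Real.exp ((δΓ + 1) * lam * n) * E) * S := by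
            field_simp
        _ ≤ B * Real.exp (δ₀ * lam * w / (1 + lam)) * S := by
            have hSpos : 0 ≤ S := Finset.sum_nonneg fun _ _ => (Real.exp_pos _).le
            apply mul_le_mul_of_nonneg_right _ hSpos
            apply mul_le_mul_of_nonneg_left _ (by linarith : (0:ℝ) ≤ B)
            rw [hE, ← Real.exp_add]
            apply Real.exp_le_exp.mpr
            have heq : (δΓ + 1) * lam * n + (-(δ₀ - δ * (1 + lam)) * n + δ₀ * lam * w) / (1 + lam)
                = ((δΓ + 1) * lam - (δ₀ / (1 + lam) - δ)) * n + δ₀ * lam * w / (1 + lam) := by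
              field_simp
              ring
            rw [heq]
            have : ((δΓ + 1) * lam - (δ₀ / (1 + lam) - δ)) * n ≤ 0 :=
              mul_nonpos_of_nonpos_of_nonneg hineq.le (Nat.cast_nonneg n)
            linarith
  constructor
  · intro M hM n
    have hM0 : 0 ≤ M := le_trans (Finset.sum_nonneg fun _ _ => (Real.exp_pos _).le) (hM n)
    calc ∑ σ ∈ A n, Real.exp (-δ₀ * b σ)
        ≤ B * Real.exp (δ₀ * lam * w / (1 + lam)) * ∑ γ ∈ A' n, Real.exp (-δ * b γ) := key n
      _ ≤ B * Real.exp (δ₀ * lam * w / (1 + lam)) * M :=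
          mul_le_mul_of_nonneg_left (hM n) hBe.le
      _ = M * B * Real.exp (δ₀ * lam * w / (1 + lam)) := by ring
  · intro hdiv M
    have := hdiv (max M 0 * (B * Real.exp (δ₀ * lam * w / (1 + lam))))
    refine this.mono fun n hn => ?_
    have h1 : max M 0 * (B * Real.exp (δ₀ * lam * w / (1 + lam))) ≤
        B * Real.exp (δ₀ * lam * w / (1 + lam)) * ∑ γ ∈ A' n, Real.exp (-δ * b γ) :=
      le_trans hn (key n)
    have h2 : max M 0 ≤ ∑ γ ∈ A' n, Real.exp (-δ * b γ) := by
      rw [mul_comm] at h1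
      exact le_of_mul_le_mul_left h1 hBe
    exact le_trans (le_max_left M 0) h2
end

section
/- Let G be a group acting on a set X with basepoint o, let d be a G-invariant metric on X, and suppose Ω ⊆ G is a subsemigroup freely generated by a finite set S with the property that for all g ∈ Ω and m ≥ 1, ∑_{η ∈ g·S^m} e^{−δ·d(o, η·o)} ≥ e^{−δ·d(o, g·o)}. Then ∑_{γ∈Ω} e^{−δ·d(o, γ·o)} = ∑_{m=0}^∞ ∑_{g∈S} ∑_{η∈g·S^m} e^{−δ·d(o, η·o)} ≥ ∑_{m=0}^∞ ∑_{g∈S} e^{−δ·d(o, g·o)} = ∞, so the critical exponent of Ω (abscissa of convergence of its Poincaré series) is at least δ. -/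
/-- For a subsemigroup Ω of G freely generated by finitely many elements
(letters a i), acting on a metric space with G-invariant metric and basepoint o, if the
layered sums satisfy ∑_{η∈gS^m} e^{−δ d(o,ηo)} ≥ e^{−δ d(o,go)}, then the Poincaré series
of Ω diverges at δ and its critical exponent is at least δ. -/
theorem stmt19 {G X : Type*} [Group G] [MetricSpace X] [MulAction G X]
    (hinv : ∀ (g : G) (p q : X), dist (g • p) (g • q) = dist p q) (o : X)
    {ι : Type*} [Fintype ι] [Nonempty ι] (a : ι → G)
    (hfree : ∀ w₁ w₂ : List ι, w₁ ≠ [] → w₂ ≠ [] →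
      (w₁.map a).prod = (w₂.map a).prod → w₁ = w₂)
    (δ : ℝ) (hδ : 0 < δ)
    (hgrow : ∀ w : List ι, w ≠ [] → ∀ m : ℕ, 1 ≤ m →
      Real.exp (-δ * dist o ((w.map a).prod • o)) ≤
        ∑ v : Fin m → ι,
          Real.exp (-δ * dist o (((w.map a).prod * ((List.ofFn v).map a).prod) • o))) :
    ¬ Summable (fun g : {g : G // ∃ w : List ι, w ≠ [] ∧ (w.map a).prod = g} =>
        Real.exp (-δ * dist o (g.1 • o))) ∧
      ∀ t : ℝ, 0 < t →
        Summable (fun g : {g : G // ∃ w : List ι, w ≠ [] ∧ (w.map a).prod = g} =>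
          Real.exp (-t * dist o (g.1 • o))) → δ ≤ t := by
  have hdiv : ¬ Summable (fun g : {g : G // ∃ w : List ι, w ≠ [] ∧ (w.map a).prod = g} =>
      Real.exp (-δ * dist o (g.1 • o))) := by
    intro hs
    set T := {g : G // ∃ w : List ι, w ≠ [] ∧ (w.map a).prod = g}
    set φ : (Σ n : ℕ, ι × (Fin n → ι)) → T := fun p =>
      ⟨((p.2.1 :: List.ofFn p.2.2).map a).prod,
        p.2.1 :: List.ofFn p.2.2, List.cons_ne_nil _ _, rfl⟩ with hφ
    have hφinj : Function.Injective φ := by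
      rintro ⟨n, g, v⟩ ⟨n', g', v'⟩ h
      have h' : ((g :: List.ofFn v).map a).prod = ((g' :: List.ofFn v').map a).prod :=
        congrArg Subtype.val h
      have hw := hfree _ _ (List.cons_ne_nil _ _) (List.cons_ne_nil _ _) h'
      obtain ⟨rfl, hv⟩ : g = g' ∧ List.ofFn v = List.ofFn v' := by
        simpa using hw
      have hn : n = n' := by
        have := congrArg List.length hv
        simpa using this
      subst hn
      have hvv : v = v' := List.ofFn_injective hv
      simp [hvv]
    have hs2 : Summable (fun p : Σ n : ℕ, ι × (Fin n → ι) =>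
        Real.exp (-δ * dist o ((φ p).1 • o))) := hs.comp_injective hφinj
    have hsig : Summable (fun n : ℕ => ∑' p : ι × (Fin n → ι),
        Real.exp (-δ * dist o ((φ ⟨n, p⟩).1 • o))) :=
      hs2.sigma
    set c := ∑ g : ι, Real.exp (-δ * dist o (a g • o)) with hc
    have hcpos : 0 < c :=
      Finset.sum_pos (fun g _ => Real.exp_pos _) Finset.univ_nonempty
    have hge : ∀ n : ℕ, 1 ≤ n → c ≤ ∑' p : ι × (Fin n → ι),
        Real.exp (-δ * dist o ((φ ⟨n, p⟩).1 • o)) := by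
      intro n hn
      rw [tsum_fintype, Fintype.sum_prod_type]
      refine Finset.sum_le_sum (fun g _ => ?_)
      have h := hgrow [g] (List.cons_ne_nil _ _) n hn
      simpa [φ] using h
    have hlim := hsig.tendsto_atTop_zero
    have hev : ∀ᶠ n : ℕ in Filter.atTop, (∑' p : ι × (Fin n → ι),
        Real.exp (-δ * dist o ((φ ⟨n, p⟩).1 • o))) < c :=
      hlim.eventually (eventually_lt_nhds hcpos)
    obtain ⟨n, hn1, hn2⟩ := (hev.and (Filter.eventually_ge_atTop 1)).exists
    exact absurd (hge n hn2) (not_le.2 hn1)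
  refine ⟨hdiv, fun t ht hsum => ?_⟩
  by_contra hlt
  push_neg at hlt
  refine hdiv (hsum.of_nonneg_of_le (fun _ => (Real.exp_pos _).le) (fun g => ?_))
  have hd : (0 : ℝ) ≤ dist o (g.1 • o) := dist_nonneg
  exact Real.exp_le_exp.2 (by nlinarith)
end
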